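/- Let k be an algebraically closed field of characteristic different from 5, and let z ∈ k⁵ be nonzero with z_i² = z_{i+1} z_{i+4} for all i ∈ ℤ/5 (indices mod 5). Then z₀ ≠ 0 and there exists t ∈ k with t⁵ = 1 such that z = z₀·(1, t, t², t³, t⁴). -/

import Mathlib

/-!
If one coordinate vanishes, then `z_{i+1}² = z_{i+2} z_i` forces the next one to vanish, so all do.
Otherwise every `z_i` is a unit and the equations say `z_{i+1} / z_i = z_i / z_{i-1}`: consecutive
ratios all equal `t = z₁ / z₀`, so `z_i = z₀ tⁱ`, and going once around the cycle gives `t⁵ = 1`.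
-/

section CyclicQuadrics

variable {K : Type*} [Field K] {n : ℕ} {z : ZMod n → K}

theorem apply_add_one_eq_zero_of_sq_eq_mul (h : ∀ i, z i ^ 2 = z (i + 1) * z (i - 1))
    {i : ZMod n} (hi : z i = 0) : z (i + 1) = 0 :=
  (pow_eq_zero_iff two_ne_zero).mp (by rw [h, add_sub_cancel_right, hi, mul_zero])

theorem eq_zero_of_sq_eq_mul_of_apply_eq_zero [NeZero n]
    (h : ∀ i, z i ^ 2 = z (i + 1) * z (i - 1)) {i : ZMod n} (hi : z i = 0) : z = 0 := by
  have hall : ∀ m : ℕ, z (i + m) = 0 := by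
    intro m
    induction m with
    | zero => simpa using hi
    | succ m ih =>
      rw [Nat.cast_succ, ← add_assoc]
      exact apply_add_one_eq_zero_of_sq_eq_mul h ih
  funext j
  simpa using hall (j - i).val

theorem natCast_add_one_eq_mul_of_sq_eq_mul (h : ∀ i, z i ^ 2 = z (i + 1) * z (i - 1))
    (hz : ∀ i, z i ≠ 0) (m : ℕ) : z (m + 1) = z 1 / z 0 * z m := by
  induction m with
  | zero => simp [div_mul_cancel₀ _ (hz 0)]
  | succ m ih =>
    have hm := h (m + 1)
    rw [add_sub_cancel_right, ih] at hm
    push_cast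
    apply mul_right_cancel₀ (hz m)
    linear_combination -hm - z 1 / z 0 * z m * ih

theorem natCast_eq_mul_pow_of_sq_eq_mul (h : ∀ i, z i ^ 2 = z (i + 1) * z (i - 1))
    (hz : ∀ i, z i ≠ 0) (m : ℕ) : z m = z 0 * (z 1 / z 0) ^ m := by
  induction m with
  | zero => simp
  | succ m ih =>
    rw [Nat.cast_succ, natCast_add_one_eq_mul_of_sq_eq_mul h hz, ih]
    ring

theorem exists_pow_eq_one_of_sq_eq_mul [NeZero n] (hz : z ≠ 0)
    (h : ∀ i, z i ^ 2 = z (i + 1) * z (i - 1)) :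
    z 0 ≠ 0 ∧ ∃ t : K, t ^ n = 1 ∧ ∀ i : ZMod n, z i = z 0 * t ^ i.val := by
  have hne : ∀ i, z i ≠ 0 := fun i hi => hz (eq_zero_of_sq_eq_mul_of_apply_eq_zero h hi)
  have hpow := natCast_eq_mul_pow_of_sq_eq_mul h hne
  refine ⟨hne 0, z 1 / z 0, ?_, fun i => by simpa using hpow i.val⟩
  have hcycle := hpow n
  rw [ZMod.natCast_self] at hcycle
  exact (mul_eq_left₀ (hne 0)).mp hcycle.symm

end CyclicQuadrics

theorem quadric_solutions_general (k : Type) [Field k]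
    (z : ZMod 5 → k) (hz : z ≠ 0) (h : ∀ i : ZMod 5, z i ^ 2 = z (i + 1) * z (i + 4)) :
    z 0 ≠ 0 ∧ ∃ t : k, t ^ 5 = 1 ∧ ∀ i : ZMod 5, z i = z 0 * t ^ i.val := by
  have h_four : (4 : ZMod 5) = -1 := by decide
  exact exists_pow_eq_one_of_sq_eq_mul hz fun i => by rw [h, h_four, ← sub_eq_add_neg]

/-- Over an algebraically closed field of characteristic `≠ 5`, a nonzero solution of
the quadrics `z_i² = z_{i+1} z_{i+4}` (indices mod 5) has `z₀ ≠ 0` and is of the form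
`z₀·(1, t, t², t³, t⁴)` for some fifth root of unity `t`. -/
theorem quadric_solutions (k : Type) [Field k] [IsAlgClosed k] (h5 : (5 : k) ≠ 0)
    (z : ZMod 5 → k) (hz : z ≠ 0) (h : ∀ i : ZMod 5, z i ^ 2 = z (i + 1) * z (i + 4)) :
    z 0 ≠ 0 ∧ ∃ t : k, t ^ 5 = 1 ∧ ∀ i : ZMod 5, z i = z 0 * t ^ i.val :=
  quadric_solutions_general k z hz h
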